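/- arXiv:1206.0340 — 2 statements merged into one kernel-verified Lean document; each statement's English description precedes it below -/
import Mathlib

section
/- Let b > 1 be an integer and define D : (0,1) → ℝ by D(x) = ∑_{n=1}^∞ d(n)·a_n(x)/b^n, where a_n(x) = ⌊b^n·x⌋ − b·⌊b^{n−1}·x⌋ is the n-th base-b digit of x. Then D is continuous at every point x ∈ (0,1) such that b^n·x is not an integer for any n ≥ 0 (i.e., at every x that does not have a finite base-b expansion). -/
/-- The map `x ↦ ∑_{n=1}^∞ d(n)·a_n(x)/b^n`, where
`a_n(x) = ⌊b^n x⌋ − b⌊b^{n−1} x⌋` is the `n`-th base-`b` digit of `x`. -/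
noncomputable def digitDivisorSum (b : ℕ) (x : ℝ) : ℝ :=
  ∑' n : ℕ, ((Nat.divisors (n + 1)).card : ℝ) *
    ((⌊(b : ℝ) ^ (n + 1) * x⌋ - (b : ℤ) * ⌊(b : ℝ) ^ n * x⌋ : ℤ) : ℝ) / (b : ℝ) ^ (n + 1)

open Filter

namespace DigitDivisorAux

/-- The `n`-th term of the series. -/
noncomputable def f (b : ℕ) (n : ℕ) (y : ℝ) : ℝ :=
  ((Nat.divisors (n + 1)).card : ℝ) *
    ((⌊(b : ℝ) ^ (n + 1) * y⌋ - (b : ℤ) * ⌊(b : ℝ) ^ n * y⌋ : ℤ) : ℝ) / (b : ℝ) ^ (n + 1)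

/-- The summable majorant. -/
noncomputable def u (b : ℕ) (n : ℕ) : ℝ :=
  ((n : ℝ) + 1) * ((b : ℝ) - 1) * (1 / (b : ℝ)) ^ (n + 1)

lemma digit_bound {b : ℕ} (hb : 1 < b) (v : ℝ) :
    |((⌊(b : ℝ) * v⌋ - (b : ℤ) * ⌊v⌋ : ℤ) : ℝ)| ≤ (b : ℝ) - 1 := by
  have hb0 : (0:ℝ) < b := by positivity
  have h1 : (b : ℤ) * ⌊v⌋ ≤ ⌊(b : ℝ) * v⌋ := by
    apply Int.le_floor.2
    push_cast
    exact mul_le_mul_of_nonneg_left (Int.floor_le v) hb0.le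
  have h2 : ⌊(b : ℝ) * v⌋ < (b : ℤ) * (⌊v⌋ + 1) := by
    apply Int.floor_lt.2
    push_cast
    exact mul_lt_mul_of_pos_left (Int.lt_floor_add_one v) hb0
  have e : (b : ℤ) * (⌊v⌋ + 1) = (b : ℤ) * ⌊v⌋ + b := by ring
  have hle : ⌊(b : ℝ) * v⌋ - (b : ℤ) * ⌊v⌋ ≤ (b : ℤ) - 1 := by omega
  have hge : (0:ℤ) ≤ ⌊(b : ℝ) * v⌋ - (b : ℤ) * ⌊v⌋ := by omega
  have hb1 : (1:ℝ) ≤ b := by exact_mod_cast hb.le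
  rw [abs_le]
  have hge' : (0:ℝ) ≤ (⌊(b : ℝ) * v⌋ : ℝ) - (b : ℝ) * (⌊v⌋ : ℝ) := by exact_mod_cast hge
  have hle' : (⌊(b : ℝ) * v⌋ : ℝ) - (b : ℝ) * (⌊v⌋ : ℝ) ≤ (b : ℝ) - 1 := by exact_mod_cast hle
  constructor
  · push_cast
    linarith
  · push_cast
    linarith

lemma divisors_card_le (n : ℕ) : ((n + 1).divisors.card : ℝ) ≤ (n : ℝ) + 1 := by
  have h : (n + 1).divisors ⊆ Finset.Icc 1 (n + 1) := by
    intro d hd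
    rw [Nat.mem_divisors] at hd
    exact Finset.mem_Icc.2 ⟨Nat.one_le_iff_ne_zero.2 (fun h => by simp [h] at hd),
      Nat.le_of_dvd (by omega) hd.1⟩
  have h2 := Finset.card_le_card h
  simp only [Nat.card_Icc, Nat.add_sub_cancel] at h2
  exact_mod_cast h2

lemma u_summable {b : ℕ} (hb : 1 < b) : Summable (u b) := by
  have hb0 : (0:ℝ) < b := by positivity
  have hr : ‖(1 / (b : ℝ))‖ < 1 := by
    rw [Real.norm_eq_abs, abs_of_pos (by positivity), div_lt_one hb0]
    exact_mod_cast hb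
  have h1 : Summable (fun n : ℕ => (n : ℝ) ^ 1 * (1 / (b : ℝ)) ^ n) :=
    summable_pow_mul_geometric_of_norm_lt_one 1 hr
  have h2 : Summable (fun n : ℕ => ((n + 1 : ℕ) : ℝ) ^ 1 * (1 / (b : ℝ)) ^ (n + 1)) :=
    (summable_nat_add_iff 1).2 h1
  apply (h2.mul_left ((b : ℝ) - 1)).congr
  intro n
  unfold u
  push_cast
  ring

lemma f_bound {b : ℕ} (hb : 1 < b) (n : ℕ) (y : ℝ) : ‖f b n y‖ ≤ u b n := by
  have hb0 : (0:ℝ) < b := by positivity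
  unfold f u
  rw [Real.norm_eq_abs, abs_div, abs_mul, abs_of_pos (show (0:ℝ) < (b:ℝ)^(n+1) by positivity),
    div_le_iff₀ (by positivity)]
  have hd := digit_bound hb ((b : ℝ) ^ n * y)
  rw [← mul_assoc, ← pow_succ'] at hd
  have h1 : |((Nat.divisors (n + 1)).card : ℝ)| ≤ (n : ℝ) + 1 := by
    rw [abs_of_nonneg (by positivity)]; exact divisors_card_le n
  calc |((Nat.divisors (n + 1)).card : ℝ)| *
        |((⌊(b : ℝ) ^ (n+1) * y⌋ - (b : ℤ) * ⌊(b : ℝ) ^ n * y⌋ : ℤ) : ℝ)|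
      ≤ ((n : ℝ) + 1) * ((b : ℝ) - 1) := mul_le_mul h1 hd (abs_nonneg _) (by positivity)
    _ = ((n : ℝ) + 1) * ((b : ℝ) - 1) * ((1 / (b : ℝ)) ^ (n + 1) * (b : ℝ) ^ (n + 1)) := by
        rw [one_div, inv_pow, inv_mul_cancel₀ (by positivity)]; ring
    _ = ((n : ℝ) + 1) * ((b : ℝ) - 1) * (1 / (b : ℝ)) ^ (n + 1) * (b : ℝ) ^ (n + 1) := by ring

end DigitDivisorAux

open DigitDivisorAux in
/-- Let `b > 1` be an integer and `D : (0,1) → ℝ` be given by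
`D(x) = ∑_{n=1}^∞ d(n)·a_n(x)/b^n`. Then `D` is continuous at every point
`x ∈ (0,1)` whose base-`b` expansion does not terminate, i.e. such that `b^n·x`
is never an integer. -/
theorem digitDivisorSum_continuousAt (b : ℕ) (hb : 1 < b) (x : ℝ)
    (hx : x ∈ Set.Ioo (0 : ℝ) 1)
    (hnt : ∀ n : ℕ, ¬ ∃ z : ℤ, (b : ℝ) ^ n * x = (z : ℝ)) :
    ContinuousWithinAt (digitDivisorSum b) (Set.Ioo (0 : ℝ) 1) x := by
  have hkey : digitDivisorSum b = fun y => ∑' n, f b n y := rfl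
  rw [hkey]
  have huniform : TendstoUniformly (fun N y => ∑ n ∈ Finset.range N, f b n y)
      (fun y => ∑' n, f b n y) atTop :=
    tendstoUniformly_tsum_nat (u_summable hb) (fun n y => f_bound hb n y)
  -- each floor is locally constant at x
  have hloc : ∀ n : ℕ, ∀ᶠ y in nhds x, ⌊(b : ℝ) ^ n * y⌋ = ⌊(b : ℝ) ^ n * x⌋ := by
    intro n
    have hcont : ContinuousAt (fun y : ℝ => (b : ℝ) ^ n * y) x := by fun_prop
    have hfl : (⌊(b : ℝ) ^ n * x⌋ : ℝ) < (b : ℝ) ^ n * x := by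
      rcases lt_or_eq_of_le (Int.floor_le ((b : ℝ) ^ n * x)) with h | h
      · exact h
      · exact absurd ⟨⌊(b : ℝ) ^ n * x⌋, h.symm⟩ (hnt n)
    have hopen : Set.Ioo ((⌊(b : ℝ) ^ n * x⌋ : ℝ)) ((⌊(b : ℝ) ^ n * x⌋ : ℝ) + 1) ∈
        nhds ((b : ℝ) ^ n * x) :=
      IsOpen.mem_nhds isOpen_Ioo ⟨hfl, Int.lt_floor_add_one _⟩
    filter_upwards [hcont.preimage_mem_nhds hopen] with y hy
    exact Int.floor_eq_iff.2 ⟨hy.1.le, hy.2⟩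
  have hcontF : ∀ N : ℕ, ContinuousAt (fun y => ∑ n ∈ Finset.range N, f b n y) x := by
    intro N
    have heq : ∀ᶠ y in nhds x, (fun y => ∑ n ∈ Finset.range N, f b n y) y =
        ∑ n ∈ Finset.range N, f b n x := by
      have hall : ∀ᶠ y in nhds x, ∀ n ∈ Finset.range (N + 1),
          ⌊(b : ℝ) ^ n * y⌋ = ⌊(b : ℝ) ^ n * x⌋ :=
        (Filter.eventually_all_finset _).2 fun n _ => hloc n
      filter_upwards [hall] with y hy
      refine Finset.sum_congr rfl fun n hn => ?_
      rw [Finset.mem_range] at hn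
      have h1 := hy n (Finset.mem_range.2 (by omega))
      have h2 := hy (n + 1) (Finset.mem_range.2 (by omega))
      unfold f
      rw [h1, h2]
    exact Filter.EventuallyEq.continuousAt heq
  have hD : ContinuousAt (fun y => ∑' n, f b n y) x := by
    apply continuousAt_of_locally_uniform_approx_of_continuousAt
    intro v hv
    rcases (huniform v hv).exists with ⟨N, hN⟩
    exact ⟨Set.univ, Filter.univ_mem, fun y => ∑ n ∈ Finset.range N, f b n y, hcontF N,
      fun y _ => hN y⟩
  exact hD.continuousWithinAt
end

section
/- Let b ≥ 2 be an integer and let x be a real number. Suppose that for every K ≥ 1 and every L ≥ 1 there exists an integer n > L such that the n-th base-b digit of x is nonzero while the (n+1)-th through (n+K)-th base-b digits of x are all zero, where the n-th base-b digit of x is ⌊b^n·x⌋ − b·⌊b^{n−1}·x⌋. Then x is irrational. -/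
/-- Let `b ≥ 2` and let `x` be a real number. If for every `K ≥ 1`
and every `L ≥ 1` there is an `n > L` whose base-`b` digit
`⌊b^n x⌋ − b⌊b^{n−1} x⌋` is nonzero while digits `n+1, …, n+K` are all zero,
then `x` is irrational. -/
theorem irrational_of_digit_runs (b : ℕ) (hb : 2 ≤ b) (x : ℝ)
    (h : ∀ K : ℕ, 1 ≤ K → ∀ L : ℕ, 1 ≤ L → ∃ n : ℕ, L < n ∧
      ⌊(b : ℝ) ^ n * x⌋ - (b : ℤ) * ⌊(b : ℝ) ^ (n - 1) * x⌋ ≠ 0 ∧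
      ∀ j : ℕ, 1 ≤ j → j ≤ K →
        ⌊(b : ℝ) ^ (n + j) * x⌋ - (b : ℤ) * ⌊(b : ℝ) ^ (n + j - 1) * x⌋ = 0) :
    Irrational x := by
  rintro ⟨r, rfl⟩
  set q : ℕ := r.den with hqdef
  have hq : 0 < q := r.pos
  have hbR : (2:ℝ) ≤ (b:ℝ) := by exact_mod_cast hb
  have hb0 : (0:ℝ) < (b:ℝ) := by linarith
  obtain ⟨n, hn1, hd, hz⟩ := h q hq 1 le_rfl
  -- telescoping: zero digits give floor multiplication
  have key : ∀ j, j ≤ q → ⌊(b:ℝ)^(n+j) * r⌋ = (b:ℤ)^j * ⌊(b:ℝ)^n * r⌋ := by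
    intro j
    induction j with
    | zero => intro _; simp
    | succ k ih =>
      intro hk
      have h1 := hz (k+1) (by omega) hk
      have h2 : n + (k+1) - 1 = n + k := by omega
      rw [h2] at h1
      have h3 : ⌊(b:ℝ)^(n+(k+1)) * r⌋ = (b:ℤ) * ⌊(b:ℝ)^(n+k) * r⌋ := by omega
      rw [h3, ih (by omega)]; ring
  -- F := fractional part of b^n * r
  set m : ℤ := ⌊(b:ℝ)^n * (r:ℝ)⌋ with hmdef
  have hm : (b:ℝ)^n * (r:ℝ) = (m:ℝ) := by
    have hK := key q le_rfl
    have hF0 : (0:ℝ) ≤ (b:ℝ)^n * r - m := sub_nonneg.2 (Int.floor_le _)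
    have hF1 : (b:ℝ)^(n+q) * r - ((⌊(b:ℝ)^(n+q) * r⌋ : ℤ) : ℝ) < 1 := by
      have := Int.lt_floor_add_one ((b:ℝ)^(n+q) * r)
      linarith
    have hsplit : (b:ℝ)^(n+q) = (b:ℝ)^q * (b:ℝ)^n := by rw [← pow_add]; ring_nf
    have hKR : ((⌊(b:ℝ)^(n+q) * r⌋ : ℤ) : ℝ) = (b:ℝ)^q * (m:ℝ) := by
      rw [hK]; push_cast; ring
    have hbig : (b:ℝ)^q * ((b:ℝ)^n * r - m) < 1 := by
      calc (b:ℝ)^q * ((b:ℝ)^n * r - m)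
          = (b:ℝ)^(n+q) * r - ((⌊(b:ℝ)^(n+q) * r⌋ : ℤ) : ℝ) := by
            rw [hKR, hsplit]; ring
        _ < 1 := hF1
    -- q * F is a nonneg integer < 1
    have hden : ((q:ℝ)) * (r:ℝ) = (r.num:ℝ) := by
      rw [hqdef, Rat.cast_def]
      field_simp
    set M : ℤ := (b:ℤ)^n * r.num - (q:ℤ) * m with hMdef
    have hMR : (M:ℝ) = (q:ℝ) * ((b:ℝ)^n * r - m) := by
      rw [hMdef]
      push_cast
      rw [← hden]; ring
    have hqb : (q:ℝ) < (b:ℝ)^q := by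
      have : q < b ^ q := Nat.lt_pow_self (by omega)
      exact_mod_cast this
    have hM0 : (0:ℝ) ≤ (M:ℝ) := by
      rw [hMR]; positivity
    have hM1 : (M:ℝ) < 1 := by
      rcases eq_or_lt_of_le hF0 with hF | hF
      · rw [hMR, ← hF]; simp
      · rw [hMR]
        calc (q:ℝ) * ((b:ℝ)^n * r - m) < (b:ℝ)^q * ((b:ℝ)^n * r - m) := by
              exact mul_lt_mul_of_pos_right hqb hF
          _ < 1 := hbig
    have hMz : M = 0 := by
      have h0 : (0:ℤ) ≤ M := by exact_mod_cast hM0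
      have h1 : M < 1 := by exact_mod_cast hM1
      omega
    have : (q:ℝ) * ((b:ℝ)^n * r - m) = 0 := by rw [← hMR, hMz]; simp
    have hqne : (q:ℝ) ≠ 0 := by positivity
    have := mul_eq_zero.mp this
    rcases this with h' | h'
    · exact absurd h' hqne
    · linarith
  -- second application: a later nonzero digit is impossible
  obtain ⟨n', hn', hd', -⟩ := h 1 le_rfl n (by omega)
  apply hd'
  have hfl : ∀ k, n ≤ k → ⌊(b:ℝ)^k * (r:ℝ)⌋ = (b:ℤ)^(k-n) * m := by
    intro k hk
    have e1 : (b:ℝ)^k = (b:ℝ)^(k-n) * (b:ℝ)^n := by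
      rw [← pow_add]; congr 1; omega
    have : (b:ℝ)^k * (r:ℝ) = (((b:ℤ)^(k-n) * m : ℤ) : ℝ) := by
      rw [e1, mul_assoc, hm]; push_cast; ring
    rw [this, Int.floor_intCast]
  rw [hfl n' (by omega), hfl (n'-1) (by omega)]
  have e2 : n' - n = (n' - 1 - n) + 1 := by omega
  rw [e2, pow_succ]; ring
end
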